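/- arXiv:2504.15868 — 3 statements merged into one kernel-verified Lean document; each statement's English description precedes it below -/
import Mathlib

section
/- For a Hessenberg function h : [n] → [n], the permutation w_h := (s_{h(1)-1} ⋯ s_2 s_1)(s_{h(2)-1} ⋯ s_2) ⋯ (s_{n-1}), where the block (s_{h(i)-1} ⋯ s_i) is empty if h(i) = i, is a reduced expression; in particular ℓ(w_h) = Σ_{i=1}^{n} (h(i) − i). -/
/-- A Hessenberg function on `Fin n`: `i ≤ h i` and `h` is weakly increasing. -/
def IsHessenberg {n : ℕ} (h : Fin n → Fin n) : Prop :=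
  (∀ i, i ≤ h i) ∧ Monotone h

/-- Lexicographic order on one-line notations of permutations. -/
def LexLE {n : ℕ} (u v : Equiv.Perm (Fin n)) : Prop :=
  u = v ∨ ∃ i : Fin n, (∀ j, j < i → u j = v j) ∧ u i < v i

/-- `w` is bounded by the Hessenberg function `h`: `w i ≤ h i` for all `i`. -/
def Bounded {n : ℕ} (h : Fin n → Fin n) (w : Equiv.Perm (Fin n)) : Prop :=
  ∀ i, w i ≤ h i

/-- `w` is the lexicographically maximal permutation with `w i ≤ h i` for all `i`. -/
def IsMaxFor {n : ℕ} (h : Fin n → Fin n) (w : Equiv.Perm (Fin n)) : Prop :=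
  Bounded h w ∧ ∀ w', Bounded h w' → LexLE w' w

/-- The Coxeter length of a permutation: its number of inversions. -/
def lengthPerm {n : ℕ} (w : Equiv.Perm (Fin n)) : ℕ :=
  (Finset.univ.filter fun p : Fin n × Fin n => p.1 < p.2 ∧ w p.2 < w p.1).card

/-- `w` avoids the pattern 312. -/
def Avoids312 {n : ℕ} (w : Equiv.Perm (Fin n)) : Prop :=
  ¬ ∃ i j k : Fin n, i < j ∧ j < k ∧ w j < w k ∧ w k < w i

/-- The Bruhat order on `S_n`, generated by `w < w * t` for transpositions `t`
with `ℓ(w) < ℓ(w * t)`. -/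
def BruhatLE {n : ℕ} (u w : Equiv.Perm (Fin n)) : Prop :=
  Relation.ReflTransGen
    (fun x y => (∃ t : Equiv.Perm (Fin n), t.IsSwap ∧ y = x * t) ∧
      lengthPerm x < lengthPerm y) u w

/-- The simple transposition `s_k = (k, k+1)` (0-indexed) in `S_n`,
defined to be the identity if out of range. -/
def sN (n k : ℕ) : Equiv.Perm (Fin n) :=
  if hk : k + 1 < n then Equiv.swap ⟨k, Nat.lt_of_succ_lt hk⟩ ⟨k + 1, hk⟩ else 1

/-- The descending block `s_{b-1} s_{b-2} ⋯ s_a` (0-indexed letters). -/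
def blockWord (n a b : ℕ) : List (Equiv.Perm (Fin n)) :=
  ((List.range' a (b - a)).reverse).map (sN n)

/-- The word `(s_{h(1)-1} ⋯ s_1)(s_{h(2)-1} ⋯ s_2) ⋯ (s_{n-1})` associated to a
Hessenberg function `h` (written 0-indexed). -/
def wordOf {n : ℕ} (h : Fin n → Fin n) : List (Equiv.Perm (Fin n)) :=
  (List.finRange n).flatMap fun i : Fin n => blockWord n (i : ℕ) (h i : ℕ)

/-!
Multiplying a permutation `w` on the right by `s_k` swaps its entries in positions `k` and
`k + 1`, and adds exactly one inversion when `w k < w (k + 1)`. Read the word from left to right.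
Before the block `s_{h(i)-1} ⋯ s_i` the partial product is increasing on the positions `≥ i`, so
each letter of the block swaps an increasing pair. The block itself is the cycle sending `i` to
`h(i)` and shifting `i + 1, …, h(i)` down by one, so afterwards the product is still increasing on
the positions `> i`. Hence every letter raises the length by one.
-/

section

open Equiv Equiv.Perm

variable {n : ℕ}

def Equiv.Perm.inversions (w : Perm (Fin n)) : Finset (Fin n × Fin n) :=
  Finset.univ.filter fun p => p.1 < p.2 ∧ w p.2 < w p.1

theorem Equiv.Perm.mem_inversions {w : Perm (Fin n)} {p : Fin n × Fin n} :
    p ∈ inversions w ↔ p.1 < p.2 ∧ w p.2 < w p.1 := by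
  simp [inversions]

theorem lengthPerm_eq_card_inversions (w : Perm (Fin n)) :
    lengthPerm w = (inversions w).card := rfl

theorem lengthPerm_one : lengthPerm (1 : Perm (Fin n)) = 0 := by
  rw [lengthPerm_eq_card_inversions, Finset.card_eq_zero, Finset.eq_empty_iff_forall_notMem]
  intro p hp
  rw [mem_inversions] at hp
  exact lt_asymm hp.1 hp.2

theorem sN_apply_val {k : ℕ} (hk : k + 1 < n) (x : Fin n) :
    (sN n k x : ℕ) = if (x : ℕ) = k then k + 1 else if (x : ℕ) = k + 1 then k else x := by
  rw [sN, dif_pos hk, swap_apply_def]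
  split_ifs <;> simp_all [Fin.ext_iff]

theorem lengthPerm_mul_sN (w : Perm (Fin n)) {k : ℕ} (hk : k + 1 < n)
    (hw : w ⟨k, by omega⟩ < w ⟨k + 1, hk⟩) :
    lengthPerm (w * sN n k) = lengthPerm w + 1 := by
  set K : Fin n := ⟨k, by omega⟩
  set K₁ : Fin n := ⟨k + 1, hk⟩
  have hs : sN n k = swap K K₁ := dif_pos hk
  have swap_lt_swap : ∀ p q : Fin n, p < q → ¬(p = K ∧ q = K₁) → swap K K₁ p < swap K K₁ q := by
    intro p q hpq hne
    rw [Fin.lt_def, ← hs, sN_apply_val hk, sN_apply_val hk]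
    simp only [K, K₁, Fin.ext_iff] at hne
    rw [Fin.lt_def] at hpq
    split_ifs <;> omega
  -- the inversions of `w * s_k` are those of `w` relabelled by the swap, plus `(k, k + 1)`
  have hinv : inversions (w * swap K K₁) =
      insert (K, K₁) ((inversions w).map (prodCongr (swap K K₁) (swap K K₁)).toEmbedding) := by
    ext ⟨p, q⟩
    simp only [Finset.mem_insert, Finset.mem_map_equiv, mem_inversions, prodCongr_symm, symm_swap,
      prodCongr_apply, Prod.map, Prod.mk.injEq, mul_apply]
    constructor
    · rintro ⟨hpq, hwpq⟩
      by_cases hKK : p = K ∧ q = K₁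
      · exact Or.inl hKK
      · exact Or.inr ⟨swap_lt_swap p q hpq hKK, hwpq⟩
    · rintro (⟨rfl, rfl⟩ | ⟨hpq, hwpq⟩)
      · exact ⟨Fin.lt_def.2 (Nat.lt_succ_self k), by simpa using hw⟩
      · refine ⟨?_, hwpq⟩
        have hKK : ¬(swap K K₁ p = K ∧ swap K K₁ q = K₁) := by
          rintro ⟨hp, hq⟩
          rw [hp, hq] at hwpq
          exact lt_asymm hw hwpq
        simpa using swap_lt_swap _ _ hpq hKK
  have hnotmem : (K, K₁) ∉ (inversions w).map (prodCongr (swap K K₁) (swap K K₁)).toEmbedding := by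
    simp only [Finset.mem_map_equiv, mem_inversions, prodCongr_symm, symm_swap, prodCongr_apply,
      Prod.map, swap_apply_left, swap_apply_right]
    exact fun h => absurd h.1 (not_lt.2 (Fin.le_def.2 (Nat.le_succ k)))
  rw [lengthPerm_eq_card_inversions, lengthPerm_eq_card_inversions, hs, hinv,
    Finset.card_insert_of_notMem hnotmem, Finset.card_map]

theorem blockWord_of_le {a b : ℕ} (hba : b ≤ a) : blockWord n a b = [] := by
  simp [blockWord, Nat.sub_eq_zero_of_le hba]

theorem blockWord_eq_append {a b : ℕ} (hab : a < b) :
    blockWord n a b = blockWord n (a + 1) b ++ [sN n a] := by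
  rw [blockWord, blockWord, show b - a = b - (a + 1) + 1 by omega, List.range'_succ,
    List.reverse_cons, List.map_append]
  rfl

theorem blockWord_prod_apply_val {a b : ℕ} (hab : a ≤ b) (hb : b < n) (x : Fin n) :
    ((blockWord n a b).prod x : ℕ) =
      if (x : ℕ) < a then (x : ℕ) else if (x : ℕ) = a then b
      else if (x : ℕ) ≤ b then x - 1 else x := by
  obtain ⟨d, rfl⟩ := Nat.exists_eq_add_of_le hab
  clear hab
  induction d generalizing a x with
  | zero =>
    rw [Nat.add_zero, blockWord_of_le le_rfl, List.prod_nil, one_apply]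
    split_ifs <;> omega
  | succ d ih =>
    rw [blockWord_eq_append (by omega), List.prod_append, List.prod_singleton, mul_apply,
      show a + (d + 1) = a + 1 + d by omega, ih _ (by omega), sN_apply_val (by omega)]
    split_ifs <;> omega

theorem lengthPerm_mul_blockWord_prod (Q : Perm (Fin n)) {a b : ℕ} (hab : a ≤ b) (hb : b < n)
    (hQ : StrictMonoOn Q {x | a ≤ (x : ℕ)}) :
    lengthPerm (Q * (blockWord n a b).prod) = lengthPerm Q + (b - a) := by
  obtain ⟨d, rfl⟩ := Nat.exists_eq_add_of_le hab
  clear hab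
  induction d generalizing a with
  | zero =>
    rw [Nat.add_zero, blockWord_of_le le_rfl, List.prod_nil, mul_one, Nat.sub_self, Nat.add_zero]
  | succ d ih =>
    have hQ' : StrictMonoOn Q {x | a + 1 ≤ (x : ℕ)} :=
      hQ.mono fun x (hx : a + 1 ≤ (x : ℕ)) => show a ≤ (x : ℕ) by omega
    have hP : ∀ x : Fin n, ((blockWord n (a + 1) (a + 1 + d)).prod x : ℕ) = _ :=
      blockWord_prod_apply_val (by omega) (by omega)
    rw [show a + (d + 1) = a + 1 + d by omega, blockWord_eq_append (by omega), List.prod_append,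
      List.prod_singleton, ← mul_assoc, lengthPerm_mul_sN _ (by omega), ih hQ' (by omega)]
    · omega
    · -- `s_{b-1} ⋯ s_{a+1}` fixes `a` and sends `a + 1` to `b`
      apply hQ <;> simp only [Set.mem_ofPred_eq, Fin.lt_def, hP] <;> split_ifs <;> omega

theorem lengthPerm_mul_prod_flatMap_blockWord {h : Fin n → Fin n} (hh : ∀ i, i ≤ h i)
    {l : List (Fin n)} (hl : l.Pairwise (· < ·)) {Q : Perm (Fin n)}
    (hQ : ∀ j ∈ l, StrictMonoOn Q {x | (j : ℕ) ≤ x}) :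
    lengthPerm (Q * (l.flatMap fun i : Fin n => blockWord n i (h i)).prod) =
      lengthPerm Q + (l.map fun i : Fin n => (h i : ℕ) - i).sum := by
  induction l generalizing Q with
  | nil => simp
  | cons i l ih =>
    rw [List.pairwise_cons] at hl
    have hP : ∀ x : Fin n, ((blockWord n i (h i)).prod x : ℕ) = _ :=
      blockWord_prod_apply_val (hh i) (h i).isLt
    have hQ' : ∀ j ∈ l, StrictMonoOn (Q * (blockWord n i (h i)).prod) {x | (j : ℕ) ≤ x} := by
      intro j hj x (hx : (j : ℕ) ≤ x) y (hy : (j : ℕ) ≤ y) hxy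
      have hij : (i : ℕ) < j := hl.1 j hj
      apply hQ i List.mem_cons_self <;>
        simp only [Set.mem_ofPred_eq, Fin.lt_def, hP] at hxy ⊢ <;> split_ifs <;> omega
    rw [List.flatMap_cons, List.prod_append, ← mul_assoc, ih hl.2 hQ',
      lengthPerm_mul_blockWord_prod _ (hh i) (h i).isLt (hQ i List.mem_cons_self),
      List.map_cons, List.sum_cons, add_assoc]

theorem length_wordOf (h : Fin n → Fin n) :
    (wordOf h).length = ∑ i : Fin n, ((h i : ℕ) - (i : ℕ)) := by
  simp [wordOf, blockWord, List.length_flatMap, Fin.sum_univ_def]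

end

/-- the word `(s_{h(1)-1}⋯s_1)(s_{h(2)-1}⋯s_2)⋯(s_{n-1})` is a reduced
expression for its product `w_h`; in particular `ℓ(w_h) = ∑ᵢ (h(i) − i)`. -/
theorem stmt1 (n : ℕ) (h : Fin n → Fin n) (hh : IsHessenberg h) :
    lengthPerm (wordOf h).prod = (wordOf h).length ∧
    (wordOf h).length = ∑ i : Fin n, ((h i : ℕ) - (i : ℕ)) := by
  refine ⟨?_, length_wordOf h⟩
  have := lengthPerm_mul_prod_flatMap_blockWord hh.1 (List.sortedLT_finRange n).pairwise
    (Q := 1) fun _ _ => strictMono_id.strictMonoOn _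
  rwa [one_mul, lengthPerm_one, zero_add, ← Fin.sum_univ_def, ← length_wordOf] at this
end

section
/- A permutation w ∈ S_n is the maximal element (in lexicographic order) among permutations satisfying w(i) ≤ h(i) for all i, for some Hessenberg function h, if and only if w avoids the pattern 312 (i.e., there are no indices i < j < k with w(j) < w(k) < w(i)). -/
/-!
If `w` is the lex-maximum below a Hessenberg function `h` and has a 312 pattern `i < j < k`, then
swapping the values at `j` and `k` stays below `h` (as `w k < w i ≤ h i ≤ h j`) and is lex-larger.
Conversely, a 312-avoiding `w` is the lex-maximum below its own prefix maximum
`h i = max_{m ≤ i} w m`, which is a Hessenberg function by pigeonhole.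
-/

open Finset

section Lex

variable {n : ℕ}

theorem lexLE_iff_toLex_le {u v : Equiv.Perm (Fin n)} : LexLE u v ↔ toLex ⇑u ≤ toLex ⇑v := by
  rw [le_iff_eq_or_lt, toLex_inj, DFunLike.coe_fn_eq]
  rfl

theorem toLex_lt_toLex_mul_swap {w : Equiv.Perm (Fin n)} {j k : Fin n} (hjk : j ≤ k)
    (hw : w j < w k) : toLex ⇑w < toLex ⇑(w * Equiv.swap j k) := by
  simpa [Function.comp_def, Equiv.swap_apply_self] using
    Pi.lex_desc (f := ⇑(w * Equiv.swap j k)) hjk (by simpa using hw)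

end Lex

section Forward

variable {n : ℕ} {h : Fin n → Fin n} {w : Equiv.Perm (Fin n)}

theorem Bounded.mul_swap (hh : Monotone h) (hw : Bounded h w) {i j k : Fin n} (hij : i ≤ j)
    (hjk : w j < w k) (hki : w k < w i) : Bounded h (w * Equiv.swap j k) := by
  intro l
  rcases eq_or_ne l j with rfl | hlj
  · simpa using (hki.trans_le (hw i)).le.trans (hh hij)
  rcases eq_or_ne l k with rfl | hlk
  · simpa using hjk.le.trans (hw l)
  simpa [Equiv.swap_apply_of_ne_of_ne hlj hlk] using hw l

theorem IsMaxFor.avoids312 (hh : Monotone h) (hw : IsMaxFor h w) : Avoids312 w := by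
  rintro ⟨i, j, k, hij, hjk, hwjk, hwki⟩
  have hle := lexLE_iff_toLex_le.mp (hw.2 _ (hw.1.mul_swap hh hij.le hwjk hwki))
  exact hle.not_gt (toLex_lt_toLex_mul_swap hjk.le hwjk)

end Forward

section PrefixMax

variable {n : ℕ} {α : Type*} [LinearOrder α]

def prefixMax (f : Fin n → α) (i : Fin n) : α :=
  (Iic i).sup' nonempty_Iic f

theorem le_prefixMax (f : Fin n → α) (i : Fin n) : f i ≤ prefixMax f i :=
  le_sup' f (mem_Iic.2 le_rfl)

theorem monotone_prefixMax (f : Fin n → α) : Monotone (prefixMax f) :=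
  fun _ _ hab => sup'_mono f (Iic_subset_Iic.2 hab) nonempty_Iic

theorem exists_le_eq_prefixMax (f : Fin n → α) (i : Fin n) : ∃ m ≤ i, prefixMax f i = f m := by
  obtain ⟨m, hm, hfm⟩ := exists_mem_eq_sup' nonempty_Iic f
  exact ⟨m, mem_Iic.1 hm, hfm⟩

/-- Pigeonhole: `f` maps the `i + 1` points of `Iic i` injectively, so they cannot all land in
the `i` points of `Iio i`. -/
theorem le_prefixMax_self {f : Fin n → Fin n} (hf : Function.Injective f) (i : Fin n) :
    i ≤ prefixMax f i := by
  by_contra! hlt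
  have hmaps : ∀ j ∈ Iic i, f j ∈ Iio i := fun j hj =>
    mem_Iio.2 ((le_sup' f hj).trans_lt hlt)
  have hcard := card_le_card_of_injOn f hmaps hf.injOn
  rw [Fin.card_Iic, Fin.card_Iio] at hcard
  omega

theorem isHessenberg_prefixMax (w : Equiv.Perm (Fin n)) : IsHessenberg (prefixMax w) :=
  ⟨le_prefixMax_self w.injective, monotone_prefixMax w⟩

end PrefixMax

section Backward

variable {n : ℕ}

theorem Equiv.Perm.lt_symm_apply_of_eqOn_lt {α : Type*} [LinearOrder α] {w w' : Equiv.Perm α}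
    {i : α} (hpre : ∀ j < i, w' j = w j) (hi : w' i ≠ w i) : i < w.symm (w' i) := by
  rcases lt_trichotomy (w.symm (w' i)) i with hk | hk | hk
  · have := hpre _ hk
    rw [Equiv.apply_symm_apply, w'.injective.eq_iff] at this
    exact absurd this hk.ne
  · exact absurd (w.symm_apply_eq.mp hk) hi
  · exact hk

/-- If `w'` first exceeds `w` at position `i`, its value there is a value of `w` at some later
position `k`, and it is bounded by a value of `w` at an earlier position `m`: a 312 pattern. -/
theorem isMaxFor_prefixMax {w : Equiv.Perm (Fin n)} (hw : Avoids312 w) :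
    IsMaxFor (prefixMax w) w := by
  refine ⟨le_prefixMax w, fun w' hw' => lexLE_iff_toLex_le.mpr (not_lt.mp ?_)⟩
  rintro ⟨i, hpre, hlt⟩
  obtain ⟨m, hmi, hwm⟩ := exists_le_eq_prefixMax w i
  have hw'm : w' i ≤ w m := hwm ▸ hw' i
  have hki := Equiv.Perm.lt_symm_apply_of_eqOn_lt (fun j hj => (hpre j hj).symm) hlt.ne'
  have hmi' : m < i := hmi.lt_of_ne (by rintro rfl; exact hw'm.not_gt hlt)
  set k := w.symm (w' i)
  have hwk : w k = w' i := w.apply_symm_apply _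
  have hkm : k ≠ m := (hmi'.trans hki).ne'
  refine hw ⟨m, i, k, hmi', hki, by rwa [hwk], ?_⟩
  rw [hwk]
  exact hw'm.lt_of_ne fun h => hkm (w.injective (hwk.trans h))

end Backward

/-- `w` is the lexicographic maximum among permutations bounded by some
Hessenberg function if and only if `w` avoids the pattern 312. -/
theorem stmt2 (n : ℕ) (w : Equiv.Perm (Fin n)) :
    (∃ h : Fin n → Fin n, IsHessenberg h ∧ IsMaxFor h w) ↔ Avoids312 w :=
  ⟨fun ⟨_, ⟨_, hh⟩, hw⟩ => hw.avoids312 hh,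
    fun hw => ⟨prefixMax w, isHessenberg_prefixMax w, isMaxFor_prefixMax hw⟩⟩
end

section
/- Let h : [n] → [n] be a Hessenberg function and w_h the corresponding codominant (312-avoiding) permutation. Then for every pair i < j with j ≤ h(i), the transposition (i, j) is less than or equal to w_h in the Bruhat order on S_n. -/
/-! By the tableau criterion, `x ≤ w` in the Bruhat order as soon as every corner count of the
permutation matrix of `w` is at most the corresponding one of `x`: while `x ≠ w`, swapping the
first position `i` where they differ with the nearest later position whose value lies in
`(x i, w i]` raises the length and keeps the corner counts of `w` below those of `x`.

The corner counts of the transposition `(i j)` are those of the identity, lowered by one on the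
block `i < p ≤ j`, `i < q ≤ j`. There `w_h` has a smaller count than the identity: otherwise one
finds positions `b < c` with `w b < w c ≤ h b` (using that `h` is monotone), and exchanging the two
values would give a lexicographically larger permutation bounded by `h`. -/

open Finset Equiv

theorem Fintype.sum_add_eq_sum_add_of_eq_off_pair {ι M : Type*} [Fintype ι] [DecidableEq ι]
    [AddCommMonoid M] {f g : ι → M} {i j : ι} (hij : i ≠ j)
    (hfg : ∀ a, a ≠ i → a ≠ j → f a = g a) :
    ∑ a, f a + (g i + g j) = ∑ a, g a + (f i + f j) := by
  have split (φ : ι → M) : ∑ a, φ a = φ i + φ j + ∑ a ∈ {i, j}ᶜ, φ a := by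
    rw [← sum_pair hij, sum_add_sum_compl]
  have off_pair : ∑ a ∈ {i, j}ᶜ, f a = ∑ a ∈ {i, j}ᶜ, g a :=
    Finset.sum_congr rfl fun a ha => by
      simp only [mem_compl, mem_insert, mem_singleton, not_or] at ha
      exact hfg a ha.1 ha.2
  rw [split f, split g, off_pair]
  abel

section

variable {n : ℕ}

theorem lengthPerm_lt_mul_swap {x : Perm (Fin n)} {i j : Fin n} (hij : i < j) (hx : x i < x j) :
    lengthPerm x < lengthPerm (x * swap i j) := by
  set e := (swap i j).prodCongr (swap i j)
  have hee (p) : e (e p) = p := by simp [e, Prod.map]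
  let A : Fin n × Fin n → ℤ := fun p => if p.1 < p.2 then 1 else 0
  let B : Fin n × Fin n → ℤ := fun p => if x p.2 < x p.1 then 1 else 0
  have hlen (y : Perm (Fin n)) :
      (lengthPerm y : ℤ) = ∑ p, A p * if y p.2 < y p.1 then 1 else 0 := by
    simp only [lengthPerm, natCast_card_filter, A, ite_and, ite_mul, one_mul, zero_mul]
  have hx₀ : (lengthPerm x : ℤ) = ∑ p, A (e p) * B (e p) := by
    rw [hlen, ← e.sum_comp]
  have hx₁ : (lengthPerm (x * swap i j) : ℤ) = ∑ p, A p * B (e p) := hlen _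
  have hx₂ : (lengthPerm (x * swap i j) : ℤ) = ∑ p, A (e p) * B p := by
    rw [hx₁, ← e.sum_comp]; simp only [hee]
  -- Averaging the two expressions for each length leaves a sum of terms that are each `≥ 0`.
  have key : ∑ p, (A (e p) - A p) * (B p - B (e p)) =
      2 * ((lengthPerm (x * swap i j) : ℤ) - lengthPerm x) := by
    simp only [sub_mul, mul_sub, sum_sub_distrib]
    rw [← hx₀, ← hx₁, ← hx₂, ← hlen x]
    ring
  have hpos : 0 < ∑ p, (A (e p) - A p) * (B p - B (e p)) := by
    refine sum_pos' (fun p _ => ?_) ⟨(i, j), mem_univ _, ?_⟩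
    · simp only [A, B, e, prodCongr_apply, Prod.map, swap_apply_def]
      split_ifs <;> subst_vars <;> omega
    · simp [A, B, e, hij, hx, not_lt_of_gt hij, not_lt_of_gt hx]
  omega

/-- The number of `1`s of the permutation matrix of `y` in its top-left `p × q` corner. -/
def cornerRank (y : Perm (Fin n)) (p q : ℕ) : ℕ :=
  #{a : Fin n | (a : ℕ) < p ∧ (y a : ℕ) < q}

theorem cornerRank_one (p q : ℕ) : cornerRank (1 : Perm (Fin n)) p q = min n (min p q) := by
  simp only [cornerRank, Perm.coe_one, id_eq, ← lt_min_iff, Fin.card_filter_val_lt]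

theorem card_filter_apply_val_lt (y : Perm (Fin n)) (q : ℕ) :
    #{a : Fin n | (y a : ℕ) < q} = min n q := by
  rw [← Fin.card_filter_val_lt, card_filter, card_filter]
  exact Equiv.sum_comp y fun b : Fin n => if (b : ℕ) < q then 1 else 0

theorem cornerRank_le_cornerRank_one (y : Perm (Fin n)) (p q : ℕ) :
    cornerRank y p q ≤ cornerRank (1 : Perm (Fin n)) p q := by
  have hp : cornerRank y p q ≤ #{a : Fin n | (a : ℕ) < p} :=
    card_le_card fun a ha => by simp_all
  have hq : cornerRank y p q ≤ #{a : Fin n | (y a : ℕ) < q} :=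
    card_le_card fun a ha => by simp_all
  rw [Fin.card_filter_val_lt] at hp
  rw [card_filter_apply_val_lt] at hq
  rw [cornerRank_one]
  omega

theorem cornerRank_mul_swap {x : Perm (Fin n)} {i j : Fin n} (hij : i < j) (hx : x i < x j)
    (p q : ℕ) :
    cornerRank (x * swap i j) p q +
        (if (i : ℕ) < p ∧ p ≤ j ∧ (x i : ℕ) < q ∧ q ≤ x j then 1 else 0) =
      cornerRank x p q := by
  have := Fintype.sum_add_eq_sum_add_of_eq_off_pair hij.ne
    (f := fun a : Fin n => if (a : ℕ) < p ∧ ((x * swap i j) a : ℕ) < q then 1 else 0)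
    (g := fun a : Fin n => if (a : ℕ) < p ∧ (x a : ℕ) < q then 1 else 0)
    fun a hai haj => by simp [swap_apply_of_ne_of_ne hai haj]
  simp only [cornerRank, card_filter]
  simp only [Perm.coe_mul, Function.comp_apply, swap_apply_left, swap_apply_right] at this ⊢
  split_ifs at this ⊢ <;> omega

theorem cornerRank_add_band (y : Perm (Fin n)) (p : ℕ) {q r : ℕ} (hqr : q ≤ r) :
    cornerRank y p q + #{a : Fin n | (a : ℕ) < p ∧ q ≤ y a ∧ (y a : ℕ) < r} =
      cornerRank y p r := by
  simp only [cornerRank, card_filter, ← sum_add_distrib]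
  refine sum_congr rfl fun a _ => ?_
  split_ifs <;> omega

theorem exists_cornerRank_le_mul_swap {x w : Perm (Fin n)}
    (hxw : ∀ p q, cornerRank w p q ≤ cornerRank x p q) (hne : x ≠ w) :
    ∃ i j, i < j ∧ x i < x j ∧ ∀ p q, cornerRank w p q ≤ cornerRank (x * swap i j) p q := by
  obtain ⟨i, hi, hi_min⟩ := wellFounded_lt.has_min {a | x a ≠ w a}
    (not_forall.mp (mt Equiv.ext hne))
  have agree (a) (ha : a < i) : x a = w a := not_not.mp fun h => hi_min a h ha
  have hxw_i : x i < w i := by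
    refine (lt_or_gt_of_ne hi).resolve_right fun hlt => ?_
    have hsub : ({a | (a : ℕ) < i + 1 ∧ (x a : ℕ) < x i} : Finset (Fin n)) ⊆
        ({a | (a : ℕ) < i + 1 ∧ (w a : ℕ) < x i} : Finset (Fin n)) := fun a ha => by
      simp only [mem_filter_univ] at ha ⊢
      have hai : a < i := lt_of_le_of_ne (by omega) (by rintro rfl; omega)
      rwa [← agree a hai]
    have : cornerRank x (i + 1) (x i) < cornerRank w (i + 1) (x i) :=
      card_lt_card <| (ssubset_iff_of_subset hsub).mpr ⟨i, by simp [hlt], by simp⟩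
    exact absurd (hxw _ _) this.not_ge
  have hxc : x (x.symm (w i)) = w i := x.apply_symm_apply _
  have hic : i < x.symm (w i) := by
    rcases lt_trichotomy (x.symm (w i)) i with h | h | h
    · exact absurd (w.injective ((agree _ h).symm.trans hxc)) h.ne
    · exact absurd (by rwa [h] at hxc) hi
    · exact h
  obtain ⟨j, ⟨hij, hxij, hxjw⟩, hj_min⟩ := wellFounded_lt.has_min
    {a | i < a ∧ x i < x a ∧ x a ≤ w i} ⟨_, hic, by rwa [hxc], hxc.le⟩
  refine ⟨i, j, hij, hxij, fun p q => ?_⟩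
  have hswap := cornerRank_mul_swap hij hxij p q
  have hxw_pq := hxw p q
  split_ifs at hswap with hpq
  · obtain ⟨hip, hpj, hiq, hqj⟩ := hpq
    -- By the minimality of `j`, rows `< p` of `x` carry values in `[q, w i]` only above row `i`.
    have hsub : ({a | (a : ℕ) < p ∧ q ≤ x a ∧ (x a : ℕ) < w i + 1} : Finset (Fin n)) ⊆
        ({a | (a : ℕ) < p ∧ q ≤ w a ∧ (w a : ℕ) < w i + 1} : Finset (Fin n)) := fun a ha => by
      simp only [mem_filter_univ] at ha ⊢
      have hai : a < i := by
        rcases lt_trichotomy a i with h | rfl | h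
        · exact h
        · omega
        · exact absurd (hj_min a ⟨h, by omega, by omega⟩) (by omega)
      rwa [← agree a hai]
    have hband : #{a : Fin n | (a : ℕ) < p ∧ q ≤ x a ∧ (x a : ℕ) < w i + 1} <
        #{a : Fin n | (a : ℕ) < p ∧ q ≤ w a ∧ (w a : ℕ) < w i + 1} :=
      card_lt_card <| (ssubset_iff_of_subset hsub).mpr ⟨i, by simp only [mem_filter_univ]; omega, by simp only [mem_filter_univ]; omega⟩
    have hx_band := cornerRank_add_band x p (q := q) (r := w i + 1) (by omega)
    have hw_band := cornerRank_add_band w p (q := q) (r := w i + 1) (by omega)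
    have := hxw p (w i + 1)
    omega
  · omega

theorem bruhatLE_of_cornerRank_le {x w : Perm (Fin n)}
    (hxw : ∀ p q, cornerRank w p q ≤ cornerRank x p q) : BruhatLE x w := by
  by_cases hne : x = w
  · exact hne ▸ .refl
  obtain ⟨i, j, hij, hx, hstep⟩ := exists_cornerRank_le_mul_swap hxw hne
  have hlt := lengthPerm_lt_mul_swap hij hx
  exact .head ⟨⟨swap i j, ⟨i, j, hij.ne, rfl⟩, rfl⟩, hlt⟩ (bruhatLE_of_cornerRank_le hstep)
termination_by Fintype.card (Fin n × Fin n) - lengthPerm x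
decreasing_by
  have : lengthPerm (x * swap i j) ≤ Fintype.card (Fin n × Fin n) := card_le_univ _
  omega

namespace IsMaxFor

variable {h : Fin n → Fin n} {w : Perm (Fin n)}

/-- Exchanging the values at `b < c` would otherwise give a lexicographically larger bounded
permutation. -/
theorem lt_apply_of_lt (hw : IsMaxFor h w) {b c : Fin n} (hbc : b < c) (hwbc : w b < w c) :
    h b < w c := by
  by_contra! hcb
  have hbounded : Bounded h (w * swap b c) := fun a => by
    rcases eq_or_ne a b with rfl | hab
    · simpa using hcb
    rcases eq_or_ne a c with rfl | hac
    · simpa using hwbc.le.trans (hw.1 a)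
    · simpa [swap_apply_of_ne_of_ne hab hac] using hw.1 a
  rcases hw.2 _ hbounded with heq | ⟨k, hk_agree, hk_lt⟩
  · simpa [hwbc.ne'] using congr($heq b)
  · rcases eq_or_ne k b with rfl | hkb
    · simp [hwbc.not_gt] at hk_lt
    rcases eq_or_ne k c with rfl | hkc
    · simpa [hwbc.ne'] using hk_agree b hbc
    · simp [swap_apply_of_ne_of_ne hkb hkc] at hk_lt

theorem exists_le_apply (hw : IsMaxFor h w) (i : Fin n) : ∃ a ≤ i, h i ≤ w a := by
  by_contra! hsmall
  have hc : w (w.symm (h i)) = h i := w.apply_symm_apply _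
  have hic : i < w.symm (h i) := lt_of_not_ge fun hle => (hsmall _ hle).ne hc
  exact (hw.lt_apply_of_lt hic (by rw [hc]; exact hsmall i le_rfl)).ne hc.symm

theorem cornerRank_lt_cornerRank_one (hmono : Monotone h) (hw : IsMaxFor h w) {i j : Fin n}
    (hj : j ≤ h i) {p q : ℕ} (hip : i < p) (hpj : p ≤ j) (hiq : i < q) (hqj : q ≤ j) :
    cornerRank w p q < cornerRank (1 : Perm (Fin n)) p q := by
  rw [cornerRank_one]
  rcases le_or_gt p q with hpq | hqp
  · obtain ⟨a, hai, ha⟩ := hw.exists_le_apply i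
    have hsub : ({a | (a : ℕ) < p ∧ (w a : ℕ) < q} : Finset (Fin n)) ⊆
        ({a | (a : ℕ) < p} : Finset (Fin n)) :=
      fun b hb => by simp only [mem_filter_univ] at hb ⊢; exact hb.1
    have hlt : cornerRank w p q < #{a : Fin n | (a : ℕ) < p} :=
      card_lt_card <| (ssubset_iff_of_subset hsub).mpr
        ⟨a, by simp only [mem_filter_univ]; omega,
          by simp only [mem_filter_univ]; omega⟩
    rw [Fin.card_filter_val_lt] at hlt
    omega
  · by_contra! hge
    have hsub : ({a | (a : ℕ) < p ∧ (w a : ℕ) < q} : Finset (Fin n)) ⊆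
        ({a | (w a : ℕ) < q} : Finset (Fin n)) :=
      fun b hb => by simp only [mem_filter_univ] at hb ⊢; exact hb.2
    have hrows (a : Fin n) (ha : (w a : ℕ) < q) : (a : ℕ) < p := by
      have := eq_of_subset_of_card_le hsub
        (by rw [card_filter_apply_val_lt]; change _ ≤ cornerRank w p q; omega)
      have ha' : a ∈ ({a | (w a : ℕ) < q} : Finset (Fin n)) := by simpa using ha
      rw [← this] at ha'
      simp only [mem_filter_univ] at ha'
      exact ha'.1
    -- A row `b ≥ i` with `w b < q` and a row `c ≥ p` with `q ≤ w c ≤ p` contradict maximality.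
    obtain ⟨b, hb, hbi⟩ := exists_mem_notMem_of_card_lt_card (s := {a : Fin n | (a : ℕ) < i})
      (t := {a | (a : ℕ) < p ∧ (w a : ℕ) < q})
      (by rw [Fin.card_filter_val_lt]; change _ < cornerRank w p q; omega)
    obtain ⟨c, hc, hcp⟩ := exists_mem_notMem_of_card_lt_card (s := {a : Fin n | (a : ℕ) < p})
      (t := {a | (w a : ℕ) < p + 1})
      (by rw [Fin.card_filter_val_lt, card_filter_apply_val_lt]; omega)
    simp only [mem_filter_univ, not_lt] at hb hbi hc hcp
    have hqc : q ≤ w c := not_lt.mp fun hcq => (hrows c hcq).not_ge hcp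
    have hhb : (h i : ℕ) ≤ h b := hmono (Fin.le_def.mpr hbi)
    have := hw.lt_apply_of_lt (b := b) (c := c) (by omega) (by omega)
    omega

theorem cornerRank_le_cornerRank_swap (hmono : Monotone h) (hw : IsMaxFor h w) {i j : Fin n}
    (hij : i < j) (hj : j ≤ h i) (p q : ℕ) : cornerRank w p q ≤ cornerRank (swap i j) p q := by
  have hswap := cornerRank_mul_swap (x := 1) hij hij p q
  rw [one_mul] at hswap
  simp only [Perm.one_apply] at hswap
  by_cases hpq : (i : ℕ) < p ∧ p ≤ j ∧ (i : ℕ) < q ∧ q ≤ j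
  · simp only [hpq, and_self, if_true] at hswap
    have := hw.cornerRank_lt_cornerRank_one hmono hj hpq.1 hpq.2.1 hpq.2.2.1 hpq.2.2.2
    omega
  · simp only [hpq, if_false] at hswap
    have := cornerRank_le_cornerRank_one w p q
    omega

end IsMaxFor

end

/-- if `h` is a Hessenberg function with codominant permutation `w_h`,
then for all `i < j` with `j ≤ h i`, the transposition `(i, j)` is `≤ w_h` in
Bruhat order. -/
theorem stmt7 (n : ℕ) (h : Fin n → Fin n) (hh : IsHessenberg h)
    (w : Equiv.Perm (Fin n)) (hw : IsMaxFor h w)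
    (i j : Fin n) (hij : i < j) (hj : j ≤ h i) :
    BruhatLE (Equiv.swap i j) w :=
  bruhatLE_of_cornerRank_le (hw.cornerRank_le_cornerRank_swap hh.2 hij hj)
end
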